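/- Fix n, k ≥ 1 and j ∈ {k+1,…,n+k}. The set NC^k_j(n+k) of non-crossing partitions of {1,…,n+k} whose block containing 1,…,k has smallest element greater than k equal to j is in natural bijection with the product NC(j−k−1) × NC^{k+1}(n+2k−j+1): the blocks partitioning {k+1,…,j−1} give a non-crossing partition of a (j−k−1)-element set, and the remaining blocks, partitioning {1,…,k, j, j+1,…,n+k} with 1,…,k,j in one block, give an element of NC^{k+1}(n+2k−j+1). Consequently NC^k(n+k) decomposes into NC^k_0(n+k) (partitions in which {1,…,k} is a whole block) together with the classes NC^k_j(n+k), j = k+1,…,n+k. -/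

import Mathlib

/-- A partition of `{0,…,n-1}` is non-crossing if no two distinct blocks cross. -/
def IsNonCrossing {n : ℕ} (ν : Finpartition (Finset.univ : Finset (Fin n))) : Prop :=
  ∀ B ∈ ν.parts, ∀ C ∈ ν.parts, B ≠ C →
    ∀ i ∈ B, ∀ k ∈ B, ∀ j ∈ C, ∀ l ∈ C, i < j → j < k → k < l → False

/-- The first `k` elements of `{0,…,n-1}` all lie in one block of the partition
(this is the defining condition of the class `NC^k`). -/
def FirstTogether {n : ℕ} (k : ℕ)
    (ν : Finpartition (Finset.univ : Finset (Fin n))) : Prop :=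
  ∃ B ∈ ν.parts, ∀ i : Fin n, (i : ℕ) < k → i ∈ B

/-- `R_ν(X₁,…,Xₙ) = ∏_{B ∈ ν} R_{|B|}(X_i : i ∈ B)`, the product of cumulant
functionals over the blocks of a partition (arguments in increasing order). -/
noncomputable def partCum {A : Type*} [Ring A] (R : (k : ℕ) → (Fin k → A) → ℂ)
    {n : ℕ} (X : Fin n → A)
    (ν : Finpartition (Finset.univ : Finset (Fin n))) : ℂ :=
  ∏ B ∈ ν.parts, R B.card (fun i => X (B.orderIsoOfFin rfl i).1)

/-- `R` is the family of free cumulant functionals of `τ` : the moment–cumulant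
formula `τ(X₁⋯Xₙ) = Σ_{ν ∈ NC(n)} R_ν(X₁,…,Xₙ)` holds. -/
def MomentCumulant {A : Type*} [Ring A] [Algebra ℂ A] (τ : A →ₗ[ℂ] ℂ)
    (R : (k : ℕ) → (Fin k → A) → ℂ) : Prop :=
  ∀ n : ℕ, 0 < n → ∀ X : Fin n → A,
    τ (List.ofFn X).prod =
      ∑ᶠ ν : {ν : Finpartition (Finset.univ : Finset (Fin n)) // IsNonCrossing ν},
        partCum R X ν.1

/-- `c^k` sums : `ncSum R Z k m = Σ_{ν ∈ NC^k(m)} R_ν(Z,…,Z)`. -/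
noncomputable def ncSum {A : Type*} [Ring A] (R : (k : ℕ) → (Fin k → A) → ℂ)
    (Z : A) (k m : ℕ) : ℂ :=
  ∑ᶠ ν : {ν : Finpartition (Finset.univ : Finset (Fin m)) //
      IsNonCrossing ν ∧ FirstTogether k ν},
    partCum R (fun _ => Z) ν.1

/-- `X` and `Y` are freely independent: all their mixed free cumulants vanish. -/
def FreeIndep {A : Type*} [Ring A] (R : (k : ℕ) → (Fin k → A) → ℂ)
    (X Y : A) : Prop :=
  ∀ k : ℕ, ∀ W : Fin k → A,
    (∀ i, W i = X ∨ W i = Y) → (∃ i j, W i ≠ W j) → R k W = 0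

/-- `ν` lies in the class `NC^k_j(m)` (here `j` is 1-indexed as in the paper,
so the corresponding element of `Fin m` is `j - 1`): the block of `ν`
containing the first `k` elements has `j` as its smallest element greater
than `k`. -/
def InClassJ {m : ℕ} (k j : ℕ)
    (ν : Finpartition (Finset.univ : Finset (Fin m))) : Prop :=
  ∃ B ∈ ν.parts, (∀ i : Fin m, (i : ℕ) < k → i ∈ B) ∧
    (∃ hj : j - 1 < m, (⟨j - 1, hj⟩ : Fin m) ∈ B) ∧
    ∀ i ∈ B, k ≤ (i : ℕ) → j - 1 ≤ (i : ℕ)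

/-!
Let `B` be the block of `ν` containing `1, …, k`, and `j` its least element beyond `k`.
The gap `{k+1, …, j-1}` is a union of blocks of `ν`: a block meeting both the gap and its
complement would cross `B`, which contains `k` and `j`. Hence `ν` is determined by its
restrictions to the gap and to the complement, both non-crossing, and the complement,
relabelled increasingly as `{1, …, n+2k-j+1}`, has `1, …, k+1` (the images of `1, …, k, j`)
in one block. Conversely, two such partitions glue to a non-crossing partition since the gap
is an interval. The decomposition of `NC^k(n+k)` only records whether `B` has an element
beyond `k`, and if so its least one.
-/

open Finset

theorem Finset.image_filter_mem_of_subset_range {α β : Type*} [Fintype β] [DecidableEq α]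
    {f : β → α} {t : Finset α} (htf : (t : Set α) ⊆ Set.range f) :
    ({b | f b ∈ t} : Finset β).image f = t := by
  ext a
  simp only [mem_image, mem_filter, mem_univ, true_and]
  constructor
  · rintro ⟨b, hb, rfl⟩
    exact hb
  · intro ha
    obtain ⟨b, rfl⟩ := htf ha
    exact ⟨b, ha, rfl⟩

namespace Finpartition

theorem existsUnique_mem_image_parts_union {α β : Type*} [Fintype β]
    [DecidableEq α] [DecidableEq β] {f : β → α} (hf : f.Injective)
    (μ : Finpartition (univ : Finset β)) {T : Finset (Finset α)} (b : β)
    (hT : ∀ t ∈ T, f b ∉ t) : ∃! t, t ∈ μ.parts.image (image f) ∪ T ∧ f b ∈ t := by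
  refine ⟨(μ.part b).image f, ⟨mem_union_left _ (mem_image_of_mem _ (μ.part_mem.mpr
    (mem_univ b))), mem_image_of_mem _ (μ.mem_part_self.mpr (mem_univ b))⟩, ?_⟩
  rintro t ⟨ht, hbt⟩
  rcases mem_union.mp ht with ht | ht
  · obtain ⟨s, hs, rfl⟩ := mem_image.mp ht
    rw [μ.part_eq_of_mem hs (hf.mem_finset_image.mp hbt)]
  · exact (hT t ht hbt).elim

variable {α β γ : Type*} [Fintype α] [Fintype β] [Fintype γ]
  [DecidableEq α] [DecidableEq β] [DecidableEq γ]

def comap (P : Finpartition (univ : Finset α)) (f : β → α) :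
    Finpartition (univ : Finset β) :=
  ofErase (P.parts.image fun t => ({b | f b ∈ t} : Finset β))
    (supIndep_iff_pairwiseDisjoint.mpr <| by
      rintro _ h₁ _ h₂ hne
      obtain ⟨t, ht, rfl⟩ := mem_image.mp h₁
      obtain ⟨t', ht', rfl⟩ := mem_image.mp h₂
      have htt' : t ≠ t' := by rintro rfl; exact hne rfl
      exact disjoint_filter.mpr fun b _ => (disjoint_left.mp (P.disjoint ht ht' htt') ·))
    (eq_univ_of_forall fun b => by
      obtain ⟨t, ht, hbt⟩ := P.exists_mem (mem_univ (f b))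
      exact mem_sup.mpr ⟨_, mem_image_of_mem _ ht, by simpa using hbt⟩)

theorem mem_comap_parts {P : Finpartition (univ : Finset α)} {f : β → α} {s : Finset β} :
    s ∈ (P.comap f).parts ↔
      s.Nonempty ∧ ∃ t ∈ P.parts, ({b | f b ∈ t} : Finset β) = s := by
  simp [comap, Finset.nonempty_iff_ne_empty]

theorem filter_mem_mem_comap_parts {P : Finpartition (univ : Finset α)} {f : β → α}
    {t : Finset α} (ht : t ∈ P.parts) {b : β} (hb : f b ∈ t) :
    ({b | f b ∈ t} : Finset β) ∈ (P.comap f).parts :=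
  mem_comap_parts.mpr ⟨⟨b, by simpa using hb⟩, t, ht, rfl⟩

def IsSaturated (P : Finpartition (univ : Finset α)) (s : Set α) : Prop :=
  ∀ t ∈ P.parts, (t : Set α) ⊆ s ∨ (t : Set α) ⊆ sᶜ

theorem IsSaturated.compl {P : Finpartition (univ : Finset α)} {s : Set α}
    (h : P.IsSaturated s) : P.IsSaturated sᶜ := fun t ht => by
  rw [compl_compl]
  exact (h t ht).symm

theorem image_mem_parts_of_mem_comap {P : Finpartition (univ : Finset α)} {f : β → α}
    (hP : P.IsSaturated (Set.range f)) {s : Finset β} (hs : s ∈ (P.comap f).parts) :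
    s.image f ∈ P.parts := by
  obtain ⟨⟨b, hb⟩, t, ht, rfl⟩ := mem_comap_parts.mp hs
  have htf : (t : Set α) ⊆ Set.range f :=
    (hP t ht).resolve_right fun h => h (by simpa using hb) ⟨b, rfl⟩
  rwa [image_filter_mem_of_subset_range htf]

theorem exists_mem_comap_parts_image_eq {P : Finpartition (univ : Finset α)} {f : β → α}
    {t : Finset α} (ht : t ∈ P.parts) (htf : (t : Set α) ⊆ Set.range f) :
    ∃ s ∈ (P.comap f).parts, s.image f = t := by
  obtain ⟨a, ha⟩ := P.nonempty_of_mem_parts ht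
  obtain ⟨b, rfl⟩ := htf ha
  exact ⟨_, filter_mem_mem_comap_parts ht ha, image_filter_mem_of_subset_range htf⟩

section Glue

variable {f : β → α} {g : γ → α} (hf : f.Injective) (hg : g.Injective)
  (hfg : IsCompl (Set.range f) (Set.range g))

def glue (μ : Finpartition (univ : Finset β)) (ρ : Finpartition (univ : Finset γ)) :
    Finpartition (univ : Finset α) :=
  ofExistsUnique (μ.parts.image (image f) ∪ ρ.parts.image (image g))
    (fun _ _ => subset_univ _)
    (fun a _ => by
      by_cases ha : a ∈ Set.range f
      · obtain ⟨b, rfl⟩ := ha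
        refine existsUnique_mem_image_parts_union hf μ b fun t ht hbt => ?_
        obtain ⟨s, -, rfl⟩ := mem_image.mp ht
        obtain ⟨c, -, hc⟩ := mem_image.mp hbt
        exact Set.disjoint_left.mp hfg.disjoint ⟨b, rfl⟩ ⟨c, hc⟩
      · obtain ⟨c, rfl⟩ : a ∈ Set.range g := hfg.compl_eq ▸ ha
        rw [union_comm]
        refine existsUnique_mem_image_parts_union hg ρ c fun t ht hct => ?_
        obtain ⟨s, -, rfl⟩ := mem_image.mp ht
        obtain ⟨b, -, hb⟩ := mem_image.mp hct
        exact Set.disjoint_left.mp hfg.disjoint ⟨b, hb⟩ ⟨c, rfl⟩)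
    (by
      simp only [mem_union, mem_image, image_eq_empty, not_or, not_exists, not_and]
      exact ⟨fun s hs => μ.ne_empty hs, fun s hs => ρ.ne_empty hs⟩)

variable {hf hg hfg} in
theorem mem_glue_parts {μ : Finpartition (univ : Finset β)}
    {ρ : Finpartition (univ : Finset γ)} {t : Finset α} :
    t ∈ (glue hf hg hfg μ ρ).parts ↔
      (∃ s ∈ μ.parts, s.image f = t) ∨ ∃ s ∈ ρ.parts, s.image g = t := by
  simp [glue]

theorem glue_comm (μ : Finpartition (univ : Finset β)) (ρ : Finpartition (univ : Finset γ)) :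
    glue hg hf hfg.symm ρ μ = glue hf hg hfg μ ρ :=
  Finpartition.ext (by simp [glue, union_comm])

theorem glue_isSaturated (μ : Finpartition (univ : Finset β))
    (ρ : Finpartition (univ : Finset γ)) : (glue hf hg hfg μ ρ).IsSaturated (Set.range f) := by
  intro t ht
  rcases mem_glue_parts.mp ht with ⟨s, -, rfl⟩ | ⟨s, -, rfl⟩
  · exact Or.inl (by simp)
  · exact Or.inr (hfg.compl_eq ▸ by simp)

theorem comap_glue_left (μ : Finpartition (univ : Finset β))
    (ρ : Finpartition (univ : Finset γ)) : (glue hf hg hfg μ ρ).comap f = μ := by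
  have filter_mem_image (s : Finset β) : ({b | f b ∈ s.image f} : Finset β) = s := by
    ext b
    simp [hf.mem_finset_image]
  ext s
  rw [mem_comap_parts]
  constructor
  · rintro ⟨⟨b, hb⟩, t, ht, rfl⟩
    rcases mem_glue_parts.mp ht with ⟨u, hu, rfl⟩ | ⟨u, -, rfl⟩
    · rwa [filter_mem_image]
    · obtain ⟨c, -, hc⟩ : ∃ c ∈ u, g c = f b := by simpa using hb
      exact (Set.disjoint_left.mp hfg.disjoint ⟨b, rfl⟩ ⟨c, hc⟩).elim
  · intro hs
    exact ⟨μ.nonempty_of_mem_parts hs, s.image f, mem_glue_parts.mpr (Or.inl ⟨s, hs, rfl⟩),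
      filter_mem_image s⟩

theorem comap_glue_right (μ : Finpartition (univ : Finset β))
    (ρ : Finpartition (univ : Finset γ)) : (glue hf hg hfg μ ρ).comap g = ρ := by
  rw [← glue_comm, comap_glue_left]

theorem glue_comap {P : Finpartition (univ : Finset α)} (hP : P.IsSaturated (Set.range f)) :
    glue hf hg hfg (P.comap f) (P.comap g) = P := by
  ext t
  rw [mem_glue_parts]
  constructor
  · rintro (⟨s, hs, rfl⟩ | ⟨s, hs, rfl⟩)
    · exact image_mem_parts_of_mem_comap hP hs
    · exact image_mem_parts_of_mem_comap (hfg.compl_eq ▸ hP.compl) hs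
  · intro ht
    rcases hP t ht with h | h
    · exact Or.inl (exists_mem_comap_parts_image_eq ht h)
    · exact Or.inr (exists_mem_comap_parts_image_eq ht (hfg.compl_eq ▸ h))

def splitEquiv :
    {P : Finpartition (univ : Finset α) // P.IsSaturated (Set.range f)} ≃
      Finpartition (univ : Finset β) × Finpartition (univ : Finset γ) where
  toFun P := (P.1.comap f, P.1.comap g)
  invFun p := ⟨glue hf hg hfg p.1 p.2, glue_isSaturated hf hg hfg p.1 p.2⟩
  left_inv P := Subtype.ext (glue_comap hf hg hfg P.2)
  right_inv p :=
    Prod.ext (comap_glue_left hf hg hfg p.1 p.2) (comap_glue_right hf hg hfg p.1 p.2)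

end Glue

end Finpartition

section NonCrossing

open Finpartition

variable {m a c : ℕ}

theorem IsNonCrossing.comap {P : Finpartition (univ : Finset (Fin m))} (hP : IsNonCrossing P)
    {f : Fin a → Fin m} (hf : StrictMono f) : IsNonCrossing (P.comap f) := by
  intro s hs s' hs' hss' i hi k hk j hj l hl hij hjk hkl
  obtain ⟨-, t, ht, rfl⟩ := mem_comap_parts.mp hs
  obtain ⟨-, t', ht', rfl⟩ := mem_comap_parts.mp hs'
  simp only [mem_filter_univ] at hi hk hj hl
  exact hP t ht t' ht' (by rintro rfl; exact hss' rfl) _ hi _ hk _ hj _ hl (hf hij) (hf hjk)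
    (hf hkl)

theorem IsNonCrossing.not_crossing_of_subset_range {P : Finpartition (univ : Finset (Fin m))}
    {f : Fin a → Fin m} (hf : StrictMono f) (hP : IsNonCrossing (P.comap f))
    {B C : Finset (Fin m)} (hB : B ∈ P.parts) (hC : C ∈ P.parts) (hBC : B ≠ C)
    (hBf : (B : Set (Fin m)) ⊆ Set.range f) (hCf : (C : Set (Fin m)) ⊆ Set.range f)
    {i k j l : Fin m} (hi : i ∈ B) (hk : k ∈ B) (hj : j ∈ C) (hl : l ∈ C)
    (hij : i < j) (hjk : j < k) (hkl : k < l) : False := by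
  obtain ⟨i, rfl⟩ := hBf hi
  obtain ⟨k, rfl⟩ := hBf hk
  obtain ⟨j, rfl⟩ := hCf hj
  obtain ⟨l, rfl⟩ := hCf hl
  refine hP _ (filter_mem_mem_comap_parts hB hi) _ (filter_mem_mem_comap_parts hC hj) ?_
    i (by simpa using hi) k (by simpa using hk) j (by simpa using hj) l (by simpa using hl)
    (hf.lt_iff_lt.mp hij) (hf.lt_iff_lt.mp hjk) (hf.lt_iff_lt.mp hkl)
  intro h
  have hiC : i ∈ ({b | f b ∈ C} : Finset (Fin a)) := h ▸ by simpa using hi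
  exact hBC (P.eq_of_mem_parts hB hC hi (by simpa using hiC))

theorem IsNonCrossing.of_comap {P : Finpartition (univ : Finset (Fin m))}
    {f : Fin a → Fin m} {g : Fin c → Fin m} (hf : StrictMono f) (hg : StrictMono g)
    (hfg : IsCompl (Set.range f) (Set.range g)) (hconv : (Set.range f).OrdConnected)
    (hP : P.IsSaturated (Set.range f)) (hPf : IsNonCrossing (P.comap f))
    (hPg : IsNonCrossing (P.comap g)) : IsNonCrossing P := by
  intro B hB C hC hBC i hi k hk j hj l hl hij hjk hkl
  rcases hP B hB with hBf | hBf <;> rcases hP C hC with hCf | hCf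
  · exact hPf.not_crossing_of_subset_range hf hB hC hBC hBf hCf hi hk hj hl hij hjk hkl
  · exact hCf hj (hconv.out (hBf hi) (hBf hk) ⟨hij.le, hjk.le⟩)
  · exact hBf hk (hconv.out (hCf hj) (hCf hl) ⟨hjk.le, hkl.le⟩)
  · rw [hfg.compl_eq] at hBf hCf
    exact hPg.not_crossing_of_subset_range hg hB hC hBC hBf hCf hi hk hj hl hij hjk hkl

end NonCrossing

section Embeddings

variable {m k a c : ℕ}

-- In `Fin m`, the gap `{k+1, …, j-1}` of the paper is `{k, …, k+a-1}`, where `a = j-k-1`.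
def innerEmb (hk : k ≤ c) (hm : a + c = m) : Fin a ↪o Fin m :=
  (Fin.natAddOrderEmb k).trans (Fin.castLEOrderEmb (by omega))

def outerEmb (k : ℕ) (hm : a + c = m) : Fin c ↪o Fin m :=
  OrderEmbedding.ofStrictMono
    (fun t => ⟨if (t : ℕ) < k then t else t + a, by split_ifs <;> omega⟩) fun s t hst => by
      simp only [Fin.mk_lt_mk]
      have : (s : ℕ) < t := hst
      split_ifs <;> omega

@[simp]
theorem innerEmb_val (hk : k ≤ c) (hm : a + c = m) (t : Fin a) :
    (innerEmb hk hm t : ℕ) = k + t := rfl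

@[simp]
theorem outerEmb_val (hm : a + c = m) (t : Fin c) :
    (outerEmb k hm t : ℕ) = if (t : ℕ) < k then (t : ℕ) else t + a := rfl

theorem range_innerEmb (hk : k ≤ c) (hm : a + c = m) :
    Set.range (innerEmb hk hm) = {i : Fin m | k ≤ (i : ℕ) ∧ (i : ℕ) < k + a} := by
  ext i
  constructor
  · rintro ⟨t, rfl⟩
    simp
  · rintro ⟨hki, hik⟩
    exact ⟨⟨i - k, by omega⟩, Fin.ext (by simp only [innerEmb_val]; omega)⟩

theorem compl_range_innerEmb (hk : k ≤ c) (hm : a + c = m) :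
    (Set.range (innerEmb hk hm))ᶜ = Set.range (outerEmb k hm) := by
  rw [range_innerEmb]
  ext i
  simp only [Set.mem_compl_iff, Set.mem_ofPred_eq, Set.mem_range, not_and, not_lt]
  constructor
  · intro hi
    by_cases hik : (i : ℕ) < k
    · exact ⟨⟨i, by omega⟩, Fin.ext (by simp [hik])⟩
    · exact ⟨⟨i - a, by omega⟩, Fin.ext (by simp only [outerEmb_val]; split_ifs <;> omega)⟩
  · rintro ⟨t, rfl⟩
    simp only [outerEmb_val]
    split_ifs <;> omega

theorem isCompl_range_innerEmb_outerEmb (hk : k ≤ c) (hm : a + c = m) :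
    IsCompl (Set.range (innerEmb hk hm)) (Set.range (outerEmb k hm)) :=
  compl_range_innerEmb hk hm ▸ isCompl_compl

theorem ordConnected_range_innerEmb (hk : k ≤ c) (hm : a + c = m) :
    (Set.range (innerEmb hk hm)).OrdConnected := by
  rw [range_innerEmb]
  exact ⟨fun x hx y hy z hz => ⟨hx.1.trans hz.1, lt_of_le_of_lt hz.2 hy.2⟩⟩

end Embeddings

section ClassJ

open Finpartition

variable {m k j : ℕ} {ν : Finpartition (univ : Finset (Fin m))}

theorem InClassJ.isSaturated (hk : 0 < k) (hNC : IsNonCrossing ν) (hJ : InClassJ k j ν) :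
    ν.IsSaturated {i | k ≤ (i : ℕ) ∧ (i : ℕ) < j - 1} := by
  obtain ⟨B, hB, hBk, ⟨hjm, hjB⟩, hBmin⟩ := hJ
  intro P hP
  refine or_iff_not_imp_right.mpr fun hPS x hxP => ?_
  obtain ⟨y, hyP, hyS⟩ := Set.not_subset.mp hPS
  simp only [Set.mem_compl_iff, not_not, Set.mem_ofPred_eq] at hyS
  have hPB : P ≠ B := by
    rintro rfl
    have := hBmin y hyP hyS.1
    omega
  by_contra hxS
  simp only [Set.mem_ofPred_eq, not_and, not_lt] at hxS
  rcases lt_or_ge (x : ℕ) k with hxk | hkx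
  · exact hPB (ν.eq_of_mem_parts hP hB hxP (hBk x hxk))
  rcases (hxS hkx).eq_or_lt with hxj | hxj
  · obtain rfl : (⟨j - 1, hjm⟩ : Fin m) = x := Fin.ext hxj
    exact hPB (ν.eq_of_mem_parts hP hB hxP hjB)
  · exact hNC B hB P hP hPB.symm ⟨k - 1, by omega⟩ (hBk _ (show k - 1 < k by omega))
      ⟨j - 1, hjm⟩ hjB y hyP x hxP (show k - 1 < (y : ℕ) by omega) (show (y : ℕ) < j - 1 by omega) hxj

theorem InClassJ.firstTogether_comap_outerEmb {a c : ℕ} (hm : a + c = m)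
    (hj : j = k + a + 1) (hJ : InClassJ k j ν) :
    FirstTogether (k + 1) (ν.comap (outerEmb k hm)) := by
  obtain ⟨B, hB, hBk, ⟨hjm, hjB⟩, -⟩ := hJ
  have hkB : outerEmb k hm ⟨k, by omega⟩ ∈ B := by
    convert hjB using 1
    ext
    simp only [outerEmb_val, lt_self_iff_false, ↓reduceIte]
    omega
  refine ⟨_, filter_mem_mem_comap_parts hB hkB, fun t ht => ?_⟩
  simp only [mem_filter_univ]
  rcases (Nat.lt_succ_iff.mp ht).lt_or_eq with htk | htk
  · convert hBk ⟨t, by omega⟩ htk using 1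
    ext
    simp [htk]
  · convert hkB using 2
    exact Fin.ext htk

theorem inClassJ_of_firstTogether_comap {a c : ℕ} (hkc : k < c) (hm : a + c = m)
    (hj : j = k + a + 1) (hsat : ν.IsSaturated (Set.range (innerEmb hkc.le hm)))
    (hFT : FirstTogether (k + 1) (ν.comap (outerEmb k hm))) : InClassJ k j ν := by
  obtain ⟨s, hs, hsk⟩ := hFT
  obtain ⟨-, B, hB, rfl⟩ := mem_comap_parts.mp hs
  have hkB : outerEmb k hm ⟨k, hkc⟩ ∈ B := by simpa using hsk ⟨k, hkc⟩
  have hBout : (B : Set (Fin m)) ⊆ (Set.range (innerEmb hkc.le hm))ᶜ := by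
    refine (hsat B hB).resolve_left fun h => ?_
    have := h hkB
    rw [← compl_compl (Set.range _), compl_range_innerEmb] at this
    exact this ⟨_, rfl⟩
  refine ⟨B, hB, fun i hi => ?_, ⟨by omega, ?_⟩, fun i hiB hki => ?_⟩
  · have hiB := hsk ⟨i, by omega⟩ (show i < k + 1 by omega)
    rw [mem_filter_univ] at hiB
    convert hiB using 2
    exact Fin.ext (by simp [hi])
  · convert hkB using 1
    ext
    simp only [outerEmb_val, lt_self_iff_false, ↓reduceIte]
    omega
  · have := hBout hiB
    rw [range_innerEmb] at this
    simp only [Set.mem_compl_iff, Set.mem_ofPred_eq, not_and, not_lt] at this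
    have := this hki
    omega

end ClassJ

section ClassJEquiv

open Finpartition

variable {m k j a c : ℕ}

theorem nonCrossing_inClassJ_iff (hk : 0 < k) (hkc : k < c) (hm : a + c = m)
    (hj : j = k + a + 1) (ν : Finpartition (univ : Finset (Fin m))) :
    IsNonCrossing ν ∧ FirstTogether k ν ∧ InClassJ k j ν ↔
      ν.IsSaturated (Set.range (innerEmb hkc.le hm)) ∧
        IsNonCrossing (ν.comap (innerEmb hkc.le hm)) ∧
          IsNonCrossing (ν.comap (outerEmb k hm)) ∧
            FirstTogether (k + 1) (ν.comap (outerEmb k hm)) := by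
  constructor
  · rintro ⟨hNC, -, hJ⟩
    have hsat : ν.IsSaturated (Set.range (innerEmb hkc.le hm)) := by
      rw [range_innerEmb, show k + a = j - 1 by omega]
      exact hJ.isSaturated hk hNC
    exact ⟨hsat, hNC.comap (innerEmb _ _).strictMono, hNC.comap (outerEmb _ _).strictMono,
      hJ.firstTogether_comap_outerEmb hm hj⟩
  · rintro ⟨hsat, hNCin, hNCout, hFT⟩
    have hJ := inClassJ_of_firstTogether_comap hkc hm hj hsat hFT
    refine ⟨.of_comap (innerEmb _ _).strictMono (outerEmb _ _).strictMono
      (isCompl_range_innerEmb_outerEmb _ _) (ordConnected_range_innerEmb _ _) hsat hNCin hNCout,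
      ?_, hJ⟩
    obtain ⟨B, hB, hBk, -⟩ := hJ
    exact ⟨B, hB, hBk⟩

noncomputable def classJEquiv (hk : 0 < k) (hkc : k < c) (hm : a + c = m)
    (hj : j = k + a + 1) :
    {ν : Finpartition (univ : Finset (Fin m)) //
        IsNonCrossing ν ∧ FirstTogether k ν ∧ InClassJ k j ν} ≃
      {μ : Finpartition (univ : Finset (Fin a)) // IsNonCrossing μ} ×
        {ρ : Finpartition (univ : Finset (Fin c)) //
          IsNonCrossing ρ ∧ FirstTogether (k + 1) ρ} :=
  (Equiv.subtypeEquivRight (nonCrossing_inClassJ_iff hk hkc hm hj)).trans <|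
    (Equiv.subtypeSubtypeEquivSubtypeInter _ _).symm.trans <|
      ((splitEquiv (innerEmb hkc.le hm).injective (outerEmb k hm).injective
        (isCompl_range_innerEmb_outerEmb _ _)).subtypeEquiv fun _ => Iff.rfl).trans
        (Equiv.subtypeProdEquivProd (p := IsNonCrossing)
          (q := fun ρ => IsNonCrossing ρ ∧ FirstTogether (k + 1) ρ))

end ClassJEquiv

section Decomposition

variable {m k : ℕ} {ν : Finpartition (univ : Finset (Fin m))}

theorem InClassJ.eq {j j' : ℕ} (hk : 0 < k) (hj : k < j) (hj' : k < j')
    (h : InClassJ k j ν) (h' : InClassJ k j' ν) : j = j' := by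
  obtain ⟨B, hB, hBk, ⟨hjm, hjB⟩, hBmin⟩ := h
  obtain ⟨B', hB', hB'k, ⟨hjm', hjB'⟩, hB'min⟩ := h'
  obtain rfl : B = B' :=
    ν.eq_of_mem_parts hB hB' (hBk ⟨0, by omega⟩ hk) (hB'k ⟨0, by omega⟩ hk)
  have h₁ : j - 1 ≤ j' - 1 := hBmin _ hjB' (show k ≤ j' - 1 by omega)
  have h₂ : j' - 1 ≤ j - 1 := hB'min _ hjB (show k ≤ j - 1 by omega)
  omega

theorem filter_lt_mem_parts_iff (hFT : FirstTogether k ν) :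
    univ.filter (fun i : Fin m => (i : ℕ) < k) ∈ ν.parts ↔
      ¬ ∃ j : ℕ, k + 1 ≤ j ∧ j ≤ m ∧ InClassJ k j ν := by
  constructor
  · rintro hF ⟨j, hj, -, B, hB, hBk, ⟨hjm, hjB⟩, -⟩
    obtain ⟨i, hi⟩ := ν.nonempty_of_mem_parts hF
    obtain rfl := ν.eq_of_mem_parts hB hF (hBk i (by simpa using hi)) hi
    have : j - 1 < k := (mem_filter.mp hjB).2
    omega
  · intro hno
    obtain ⟨B, hB, hBk⟩ := hFT
    by_cases hT : (B.filter fun i : Fin m => k ≤ (i : ℕ)).Nonempty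
    · obtain ⟨v, hv, hvmin⟩ :=
        (B.filter fun i : Fin m => k ≤ (i : ℕ)).exists_min_image id hT
      obtain ⟨hvB, hkv⟩ := mem_filter.mp hv
      refine (hno ⟨v + 1, by omega, v.isLt, B, hB, hBk, ⟨by simp, by simpa using hvB⟩,
        fun i hi hki => ?_⟩).elim
      simpa using hvmin i (mem_filter.mpr ⟨hi, hki⟩)
    · convert hB
      ext i
      simp only [mem_filter, mem_univ, true_and]
      exact ⟨hBk i, fun hi => not_le.mp fun hki => hT ⟨i, mem_filter.mpr ⟨hi, hki⟩⟩⟩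

end Decomposition

theorem stmt2_general (n k : ℕ) (hk : 1 ≤ k) :
    (∀ j : ℕ, k + 1 ≤ j → j ≤ n + k →
      Nonempty
        ({ν : Finpartition (Finset.univ : Finset (Fin (n + k))) //
            IsNonCrossing ν ∧ FirstTogether k ν ∧ InClassJ k j ν} ≃
          {ν : Finpartition (Finset.univ : Finset (Fin (j - k - 1))) //
            IsNonCrossing ν} ×
          {ν : Finpartition (Finset.univ : Finset (Fin (n + 2 * k - j + 1))) //
            IsNonCrossing ν ∧ FirstTogether (k + 1) ν})) ∧
    (∀ ν : Finpartition (Finset.univ : Finset (Fin (n + k))),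
      IsNonCrossing ν → FirstTogether k ν →
        ((Finset.univ.filter (fun i : Fin (n + k) => (i : ℕ) < k) ∈ ν.parts) ↔
            ¬ ∃ j : ℕ, k + 1 ≤ j ∧ j ≤ n + k ∧ InClassJ k j ν) ∧
        (∀ j j' : ℕ, k + 1 ≤ j → j ≤ n + k → k + 1 ≤ j' → j' ≤ n + k →
            InClassJ k j ν → InClassJ k j' ν → j = j')) :=
  ⟨fun j hj hjn => ⟨classJEquiv hk (by omega) (by omega) (by omega)⟩,
    fun ν _ hFT => ⟨filter_lt_mem_parts_iff hFT,
      fun j j' hj _ hj' _ => InClassJ.eq hk hj hj'⟩⟩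

/-- For `n, k ≥ 1` and `j ∈ {k+1, …, n+k}`, the class
`NC^k_j(n+k)` is in bijection with `NC(j−k−1) × NC^{k+1}(n+2k−j+1)`;
moreover `NC^k(n+k)` decomposes into `NC^k_0(n+k)` (partitions in which
`{1,…,k}` is a whole block) together with the classes `NC^k_j(n+k)`,
`j = k+1, …, n+k`, which are pairwise disjoint. -/
theorem stmt2 (n k : ℕ) (hn : 1 ≤ n) (hk : 1 ≤ k) :
    (∀ j : ℕ, k + 1 ≤ j → j ≤ n + k →
      Nonempty
        ({ν : Finpartition (Finset.univ : Finset (Fin (n + k))) //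
            IsNonCrossing ν ∧ FirstTogether k ν ∧ InClassJ k j ν} ≃
          {ν : Finpartition (Finset.univ : Finset (Fin (j - k - 1))) //
            IsNonCrossing ν} ×
          {ν : Finpartition (Finset.univ : Finset (Fin (n + 2 * k - j + 1))) //
            IsNonCrossing ν ∧ FirstTogether (k + 1) ν})) ∧
    (∀ ν : Finpartition (Finset.univ : Finset (Fin (n + k))),
      IsNonCrossing ν → FirstTogether k ν →
        ((Finset.univ.filter (fun i : Fin (n + k) => (i : ℕ) < k) ∈ ν.parts) ↔
            ¬ ∃ j : ℕ, k + 1 ≤ j ∧ j ≤ n + k ∧ InClassJ k j ν) ∧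
        (∀ j j' : ℕ, k + 1 ≤ j → j ≤ n + k → k + 1 ≤ j' → j' ≤ n + k →
            InClassJ k j ν → InClassJ k j' ν → j = j')) :=
  stmt2_general n k hk
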